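/- Under the extended positivity, extended randomization, conditional ignorability and extended modularity assumptions, the intention-to-treat outcome distribution in the experimental regime is identified as: for each t ∈ {0,1} and outcome value y, P_E(Y=y | T=t, T^O=1) = Σ_x P_O(Y=y | T=t, X=x) · P_O(X=x | T^O=1), the sum ranging over x with P_O(X=x, T^O=1) > 0. -/

import Mathlib

/-!
Extended discrete target-trial setup: `P_O` and `P_E` are probability mass functions on
`𝒴 × Bool × Bool × 𝒳` with coordinates `(Y, T, T^O, X)`; under `P_O` the event `{T = T^O}`
has probability 1.
STATEMENT 6: Under extended positivity, extended randomization, conditional ignorability and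
extended modularity, the intention-to-treat outcome distribution is identified:
`P_E(Y=y | T=t, T^O=1) = ∑_x P_O(Y=y | T=t, X=x) · P_O(X=x | T^O=1)`.
(Terms with `P_O(X=x, T^O=1) = 0` vanish, so the sum effectively ranges over `x` with
`P_O(X=x, T^O=1) > 0`.)
-/

open scoped BigOperators

noncomputable section

variable {𝒴 𝒳 : Type*} [Countable 𝒴] [Countable 𝒳]

/-- Marginal mass of `X = x` (coordinates are `(Y, T, T^O, X)`). -/
def mX (P : 𝒴 × Bool × Bool × 𝒳 → ℝ) (x : 𝒳) : ℝ :=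
  ∑' y : 𝒴, ∑' t : Bool, ∑' t' : Bool, P (y, t, t', x)

/-- Marginal mass of `T = t`. -/
def mT (P : 𝒴 × Bool × Bool × 𝒳 → ℝ) (t : Bool) : ℝ :=
  ∑' y : 𝒴, ∑' t' : Bool, ∑' x : 𝒳, P (y, t, t', x)

/-- Marginal mass of `T^O = t'`. -/
def mTo (P : 𝒴 × Bool × Bool × 𝒳 → ℝ) (t' : Bool) : ℝ :=
  ∑' y : 𝒴, ∑' t : Bool, ∑' x : 𝒳, P (y, t, t', x)

/-- Joint mass of `T = t, X = x`. -/
def mTX (P : 𝒴 × Bool × Bool × 𝒳 → ℝ) (t : Bool) (x : 𝒳) : ℝ :=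
  ∑' y : 𝒴, ∑' t' : Bool, P (y, t, t', x)

/-- Joint mass of `T^O = t', X = x`. -/
def mToX (P : 𝒴 × Bool × Bool × 𝒳 → ℝ) (t' : Bool) (x : 𝒳) : ℝ :=
  ∑' y : 𝒴, ∑' t : Bool, P (y, t, t', x)

/-- Joint mass of `Y = y, T = t, X = x`. -/
def mYTX (P : 𝒴 × Bool × Bool × 𝒳 → ℝ) (y : 𝒴) (t : Bool) (x : 𝒳) : ℝ :=
  ∑' t' : Bool, P (y, t, t', x)

/-- Joint mass of `T = t, T^O = t', X = x`. -/
def mTToX (P : 𝒴 × Bool × Bool × 𝒳 → ℝ) (t t' : Bool) (x : 𝒳) : ℝ :=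
  ∑' y : 𝒴, P (y, t, t', x)

/-- Joint mass of `T = t, T^O = t'`. -/
def mTTo (P : 𝒴 × Bool × Bool × 𝒳 → ℝ) (t t' : Bool) : ℝ :=
  ∑' y : 𝒴, ∑' x : 𝒳, P (y, t, t', x)

/-- Joint mass of `Y = y, T = t, T^O = t'`. -/
def mYTTo (P : 𝒴 × Bool × Bool × 𝒳 → ℝ) (y : 𝒴) (t t' : Bool) : ℝ :=
  ∑' x : 𝒳, P (y, t, t', x)

/-!
In each covariate stratum `x` of positive mass, ignorability and modularity of the outcome law give
`P_E(y, t, 1, x) = P_O(Y = y | T = t, X = x) · P_E(T = t, T^O = 1, X = x)`, and randomization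
together with modularity of the `(T^O, X)` law factors the last mass as
`P_E(T = t) · P_O(T^O = 1, X = x)`; strata of mass zero contribute nothing to either side.
Summing over `x`, the factor `P_E(T = t)` cancels between `P_E(Y = y, T = t, T^O = 1)` and
`P_E(T = t, T^O = 1)`. Positivity keeps `P_E(T = t)` and `P_O(T = t, X = x) = P_O(T^O = t, X = x)`
nonzero, so neither conditional degenerates to the junk value `0 / 0 = 0`.
-/

open Finset

section Marginals

variable {α β : Type*} {P : α × Bool × Bool × β → ℝ}

lemma summable_slice (hP : Summable P) (t t' : Bool) (x : β) :
    Summable fun y : α => P (y, t, t', x) :=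
  hP.comp_injective fun a b h => by simpa using h

lemma summable_slice_prod (hP : Summable P) (t t' : Bool) :
    Summable fun p : α × β => P (p.1, t, t', p.2) :=
  hP.comp_injective fun a b h => by
    simp only [Prod.mk.injEq] at h
    exact Prod.ext h.1 h.2.2.2

lemma mTX_eq_sum (hP : Summable P) (t : Bool) (x : β) :
    mTX P t x = ∑ t', mTToX P t t' x := by
  simp only [mTX, mTToX, tsum_fintype]
  exact Summable.tsum_finsetSum fun t' _ => summable_slice hP t t' x

lemma mToX_eq_sum (hP : Summable P) (t' : Bool) (x : β) :
    mToX P t' x = ∑ t, mTToX P t t' x := by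
  simp only [mToX, mTToX, tsum_fintype]
  exact Summable.tsum_finsetSum fun t _ => summable_slice hP t t' x

lemma mX_eq_sum (hP : Summable P) (x : β) :
    mX P x = ∑ t', mToX P t' x := by
  simp only [mToX_eq_sum hP, mTToX]
  rw [Finset.sum_comm]
  simp only [mX, tsum_fintype]
  rw [Summable.tsum_finsetSum fun t _ => summable_sum fun t' _ => summable_slice hP t t' x]
  exact Finset.sum_congr rfl fun t _ =>
    Summable.tsum_finsetSum fun t' _ => summable_slice hP t t' x

lemma mTTo_eq_tsum (hP : Summable P) (t t' : Bool) :
    mTTo P t t' = ∑' x, mTToX P t t' x :=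
  (Summable.tsum_comm (f := fun y x => P (y, t, t', x)) (summable_slice_prod hP t t')).symm

lemma mTo_eq_tsum (hP : Summable P) (t' : Bool) :
    mTo P t' = ∑' x, mToX P t' x := by
  have hx : ∀ t, Summable fun x => mTToX P t t' x := fun t =>
    (summable_slice_prod hP t t').prod_symm.prod
  simp only [mToX_eq_sum hP]
  rw [Summable.tsum_finsetSum fun t _ => hx t]
  simp only [← mTTo_eq_tsum hP, mTTo, mTo, tsum_fintype]
  exact Summable.tsum_finsetSum fun t _ => (summable_slice_prod hP t t').prod

lemma tsum_eq_sum_mT (hP : Summable P) : ∑' z, P z = ∑ t, mT P t := by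
  have hrow : ∀ y, ∑' w, P (y, w) = ∑ t, ∑' t', ∑' x, P (y, t, t', x) := fun y => by
    rw [(hP.prod_factor y).tsum_prod, tsum_fintype]
    exact sum_congr rfl fun t _ => ((hP.prod_factor y).prod_factor t).tsum_prod
  have hsum : ∀ t, Summable fun y => ∑' t', ∑' x, P (y, t, t', x) := fun t =>
    (summable_sum fun t' _ => (summable_slice_prod hP t t').prod).congr fun y =>
      (tsum_fintype _).symm
  rw [hP.tsum_prod, tsum_congr hrow, Summable.tsum_finsetSum fun t _ => hsum t]
  rfl

lemma mT_ne_zero (hP : HasSum P 1) (h : mT P true ∈ Set.Ioo 0 1) (t : Bool) : mT P t ≠ 0 := by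
  have htot := tsum_eq_sum_mT hP.summable
  rw [hP.tsum_eq, Fintype.sum_bool] at htot
  cases t
  · linarith [h.2]
  · exact h.1.ne'

lemma mX_nonneg (hn : ∀ z, 0 ≤ P z) (x : β) : 0 ≤ mX P x :=
  tsum_nonneg fun _ => tsum_nonneg fun _ => tsum_nonneg fun _ => hn _

lemma mToX_nonneg (hn : ∀ z, 0 ≤ P z) (t' : Bool) (x : β) : 0 ≤ mToX P t' x :=
  tsum_nonneg fun _ => tsum_nonneg fun _ => hn _

lemma mTToX_nonneg (hn : ∀ z, 0 ≤ P z) (t t' : Bool) (x : β) : 0 ≤ mTToX P t t' x :=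
  tsum_nonneg fun _ => hn _

lemma apply_le_mTToX (hP : Summable P) (hn : ∀ z, 0 ≤ P z) (y : α) (t t' : Bool) (x : β) :
    P (y, t, t', x) ≤ mTToX P t t' x :=
  (summable_slice hP t t' x).le_tsum y fun _ _ => hn _

lemma mTToX_le_mToX (hP : Summable P) (hn : ∀ z, 0 ≤ P z) (t t' : Bool) (x : β) :
    mTToX P t t' x ≤ mToX P t' x := by
  rw [mToX_eq_sum hP]
  exact single_le_sum (fun t _ => mTToX_nonneg hn t t' x) (mem_univ t)

lemma mToX_le_mX (hP : Summable P) (hn : ∀ z, 0 ≤ P z) (t' : Bool) (x : β) :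
    mToX P t' x ≤ mX P x := by
  rw [mX_eq_sum hP]
  exact single_le_sum (fun t' _ => mToX_nonneg hn t' x) (mem_univ t')

lemma mToX_eq_zero_of_mX_eq_zero (hP : Summable P) (hn : ∀ z, 0 ≤ P z) {x : β}
    (hx : mX P x = 0) (t' : Bool) : mToX P t' x = 0 :=
  le_antisymm (hx ▸ mToX_le_mX hP hn t' x) (mToX_nonneg hn t' x)

lemma apply_eq_zero_of_mX_eq_zero (hP : Summable P) (hn : ∀ z, 0 ≤ P z) {x : β}
    (hx : mX P x = 0) (y : α) (t t' : Bool) : P (y, t, t', x) = 0 :=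
  le_antisymm
    ((apply_le_mTToX hP hn y t t' x).trans <|
      (mTToX_le_mToX hP hn t t' x).trans (mToX_eq_zero_of_mX_eq_zero hP hn hx t').le)
    (hn _)

lemma mTX_eq_mToX_of_diag (hP : Summable P)
    (hdiag : ∀ (y : α) (t t' : Bool) (x : β), t ≠ t' → P (y, t, t', x) = 0) (t : Bool) (x : β) :
    mTX P t x = mToX P t x := by
  have hoff : ∀ t t', t ≠ t' → mTToX P t t' x = 0 := fun t t' h => by
    simp only [mTToX, hdiag _ t t' x h, tsum_zero]
  rw [mTX_eq_sum hP, mToX_eq_sum hP, Fintype.sum_eq_single t fun t' h => hoff t t' h.symm,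
    Fintype.sum_eq_single t fun t'' h => hoff t'' t h]

lemma mToX_pos (hP : Summable P) {x : β} (hx : 0 < mX P x)
    (h : mToX P true x / mX P x ∈ Set.Ioo 0 1) (t' : Bool) : 0 < mToX P t' x := by
  have hsum := mX_eq_sum hP x
  rw [Fintype.sum_bool] at hsum
  have h1 : 0 < mToX P true x := (div_pos_iff_of_pos_right hx).mp h.1
  have h2 : mToX P true x < mX P x := (div_lt_one hx).mp h.2
  cases t' <;> linarith

lemma mTX_eq_mT_mul_mX (hP : Summable P) {t : Bool} {x : β}
    (hrand : ∀ t', mTToX P t t' x = mT P t * mToX P t' x) : mTX P t x = mT P t * mX P x := by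
  rw [mTX_eq_sum hP, mX_eq_sum hP, mul_sum]
  exact sum_congr rfl fun t' _ => hrand t'

end Marginals

section TwoRegimes

variable {α β : Type*} {P_O P_E : α × Bool × Bool × β → ℝ}

lemma mToX_eq_of_modularity (hsE : Summable P_E) (hsO : Summable P_O) (hnE : ∀ z, 0 ≤ P_E z)
    (hnO : ∀ z, 0 ≤ P_O z) {t' : Bool} {x : β}
    (hmodTo : mToX P_E t' x * mX P_O x = mToX P_O t' x * mX P_E x)
    (hmodX : mX P_E x = mX P_O x) : mToX P_E t' x = mToX P_O t' x := by
  rcases eq_or_ne (mX P_O x) 0 with hx | hx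
  · rw [mToX_eq_zero_of_mX_eq_zero hsE hnE (hmodX.trans hx),
      mToX_eq_zero_of_mX_eq_zero hsO hnO hx]
  · rw [hmodX] at hmodTo
    exact mul_right_cancel₀ hx hmodTo

lemma apply_eq_of_ignorability {y : α} {t t' : Bool} {x : β}
    (hTXE : mTX P_E t x ≠ 0) (hTXO : mTX P_O t x ≠ 0)
    (hign : P_E (y, t, t', x) * mTX P_E t x = mYTX P_E y t x * mTToX P_E t t' x)
    (hmodY : mYTX P_E y t x * mTX P_O t x = mYTX P_O y t x * mTX P_E t x) :
    P_E (y, t, t', x) = mYTX P_O y t x / mTX P_O t x * mTToX P_E t t' x := by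
  have hcond : mYTX P_E y t x / mTX P_E t x = mYTX P_O y t x / mTX P_O t x :=
    (div_eq_div_iff hTXE hTXO).mpr hmodY
  rw [← hcond, div_mul_eq_mul_div, eq_div_iff hTXE, hign]

end TwoRegimes

theorem intention_to_treat_identification
    (P_O P_E : 𝒴 × Bool × Bool × 𝒳 → ℝ)
    (hO_nonneg : ∀ z, 0 ≤ P_O z) (hO_sum : HasSum P_O 1)
    (hE_nonneg : ∀ z, 0 ≤ P_E z) (hE_sum : HasSum P_E 1)
    -- under `P_O`, `T = T^O` with probability one
    (hTTo : ∀ (y : 𝒴) (t t' : Bool) (x : 𝒳), t ≠ t' → P_O (y, t, t', x) = 0)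
    -- Positivity
    (hposE : 0 < mT P_E true ∧ mT P_E true < 1)
    (hposO : ∀ x : 𝒳, 0 < mX P_O x →
      0 < mToX P_O true x / mX P_O x ∧ mToX P_O true x / mX P_O x < 1)
    -- Extended randomization: `T ⫫ (T^O, X)` under `P_E`
    (hrand : ∀ (t t' : Bool) (x : 𝒳), mTToX P_E t t' x = mT P_E t * mToX P_E t' x)
    -- Conditional ignorability: `Y ⫫ T^O ∣ (T, X)` under `P_E` (cross-multiplied form)
    (hign : ∀ (y : 𝒴) (t t' : Bool) (x : 𝒳),
      P_E (y, t, t', x) * mTX P_E t x = mYTX P_E y t x * mTToX P_E t t' x)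
    -- Extended modularity (cross-multiplied forms)
    (hmodY : ∀ (y : 𝒴) (t : Bool) (x : 𝒳),
      mYTX P_E y t x * mTX P_O t x = mYTX P_O y t x * mTX P_E t x)
    (hmodTo : ∀ (t' : Bool) (x : 𝒳),
      mToX P_E t' x * mX P_O x = mToX P_O t' x * mX P_E x)
    (hmodX : ∀ x : 𝒳, mX P_E x = mX P_O x) :
    ∀ (t : Bool) (y : 𝒴),
      mYTTo P_E y t true / mTTo P_E t true
        = ∑' x : 𝒳, (mYTX P_O y t x / mTX P_O t x) * (mToX P_O true x / mTo P_O true) := by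
  intro t y
  have hsO := hO_sum.summable
  have hsE := hE_sum.summable
  have hmT : mT P_E t ≠ 0 := mT_ne_zero hE_sum hposE t
  have hToX : ∀ x, mToX P_E true x = mToX P_O true x := fun x =>
    mToX_eq_of_modularity hsE hsO hE_nonneg hO_nonneg (hmodTo true x) (hmodX x)
  have hfactor : ∀ x, P_E (y, t, true, x)
      = mT P_E t * (mYTX P_O y t x / mTX P_O t x * mToX P_O true x) := by
    intro x
    rcases (mX_nonneg hO_nonneg x).eq_or_lt with hx | hx
    · rw [apply_eq_zero_of_mX_eq_zero hsE hE_nonneg ((hmodX x).trans hx.symm),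
        mToX_eq_zero_of_mX_eq_zero hsO hO_nonneg hx.symm, mul_zero, mul_zero]
    have hTXE : mTX P_E t x ≠ 0 := by
      rw [mTX_eq_mT_mul_mX hsE fun t' => hrand t t' x, hmodX]
      exact mul_ne_zero hmT hx.ne'
    have hTXO : mTX P_O t x ≠ 0 := by
      rw [mTX_eq_mToX_of_diag hsO hTTo]
      exact (mToX_pos hsO hx (hposO x hx) t).ne'
    rw [apply_eq_of_ignorability hTXE hTXO (hign y t true x) (hmodY y t x), hrand, hToX]
    ring
  have hden : mTTo P_E t true = mT P_E t * mTo P_O true := by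
    rw [mTTo_eq_tsum hsE, mTo_eq_tsum hsO, ← tsum_mul_left]
    exact tsum_congr fun x => by rw [hrand, hToX]
  rw [mYTTo, tsum_congr hfactor, tsum_mul_left, hden, mul_div_mul_left _ _ hmT,
    ← tsum_div_const]
  simp only [mul_div_assoc]

end
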